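/- arXiv:2505.18304 — 3 statements merged into one kernel-verified Lean document; each statement's English description precedes it below -/
import Mathlib

section
/- Let u be a divergence-free C¹ vector field on ℝ³ with vorticity ω. Then the vortex stretching term satisfies the pointwise bound ‖ω·∇u‖_{L^∞} ≤ C(‖ω‖_{L^∞}‖∇_h u‖_{L^∞} + ‖∇_h u‖²_{L^∞}) for an absolute constant C, i.e., the vortex stretching is controlled by the vorticity times tangential derivatives plus a quadratic tangential term. -/
noncomputable def pd (f : (Fin 3 → ℝ) → ℝ) (i : Fin 3) (x : Fin 3 → ℝ) : ℝ :=
  fderiv ℝ f x (Pi.single i 1)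

noncomputable def curl3 (u : (Fin 3 → ℝ) → Fin 3 → ℝ) (x : Fin 3 → ℝ) : Fin 3 → ℝ :=
  ![pd (fun y => u y 2) 1 x - pd (fun y => u y 1) 2 x,
    pd (fun y => u y 0) 2 x - pd (fun y => u y 2) 0 x,
    pd (fun y => u y 1) 0 x - pd (fun y => u y 0) 1 x]

/-- for a divergence-free C¹ field `u` on ℝ³ with vorticity `ω`,
the vortex stretching term satisfies
`‖ω·∇u‖_{L^∞} ≤ C(‖ω‖_{L^∞}‖∇_h u‖_{L^∞} + ‖∇_h u‖²_{L^∞})`, with `C = 6`. -/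
theorem stmt2 (u : (Fin 3 → ℝ) → Fin 3 → ℝ) (hu : ContDiff ℝ 1 u)
    (hdiv : ∀ x, ∑ i, pd (fun y => u y i) i x = 0)
    (Mω Mh : ℝ)
    (hω : ∀ x, ∀ j : Fin 3, |curl3 u x j| ≤ Mω)
    (hh : ∀ x, ∀ i : Fin 3,
      |pd (fun y => u y i) 0 x| ≤ Mh ∧ |pd (fun y => u y i) 1 x| ≤ Mh) :
    ∀ x, ∀ j : Fin 3,
      |∑ i, curl3 u x i * pd (fun y => u y j) i x| ≤ 6 * (Mω * Mh + Mh ^ 2) := by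
  intro x j
  have hMh : 0 ≤ Mh := le_trans (abs_nonneg _) (hh x 0).1
  have hMω : 0 ≤ Mω := le_trans (abs_nonneg _) (hω x 0)
  have hω0 := hω x 0
  have hω1 := hω x 1
  have hω2 := hω x 2
  simp only [curl3, Matrix.cons_val_zero, Matrix.cons_val_one, Matrix.head_cons,
    Matrix.cons_val_two, Matrix.tail_cons] at hω0 hω1 hω2
  have hdx := hdiv x
  rw [Fin.sum_univ_three] at hdx
  -- |ω₂| ≤ 2 Mh
  have hw2 : |pd (fun y => u y 1) 0 x - pd (fun y => u y 0) 1 x| ≤ 2 * Mh := by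
    calc |pd (fun y => u y 1) 0 x - pd (fun y => u y 0) 1 x|
        ≤ |pd (fun y => u y 1) 0 x| + |pd (fun y => u y 0) 1 x| := abs_sub _ _
      _ ≤ Mh + Mh := add_le_add (hh x 1).1 (hh x 0).2
      _ = 2 * Mh := by ring
  -- vertical derivative bound
  have hv : |pd (fun y => u y j) 2 x| ≤ Mω + 2 * Mh := by
    obtain rfl | rfl | rfl : j = 0 ∨ j = 1 ∨ j = 2 := by omega
    · have h1 : |pd (fun y => u y 0) 2 x| - |pd (fun y => u y 2) 0 x| ≤
          |pd (fun y => u y 0) 2 x - pd (fun y => u y 2) 0 x| := abs_sub_abs_le_abs_sub _ _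
      have h2 := (hh x 2).1
      linarith
    · have h1 : |pd (fun y => u y 1) 2 x| - |pd (fun y => u y 2) 1 x| ≤
          |pd (fun y => u y 1) 2 x - pd (fun y => u y 2) 1 x| := abs_sub_abs_le_abs_sub _ _
      have h2 := (hh x 2).2
      have h3 : |pd (fun y => u y 1) 2 x - pd (fun y => u y 2) 1 x| =
          |pd (fun y => u y 2) 1 x - pd (fun y => u y 1) 2 x| := abs_sub_comm _ _
      linarith
    · have : pd (fun y => u y 2) 2 x = -(pd (fun y => u y 0) 0 x + pd (fun y => u y 1) 1 x) := by
        linarith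
      rw [this, abs_neg]
      calc |pd (fun y => u y 0) 0 x + pd (fun y => u y 1) 1 x|
          ≤ |pd (fun y => u y 0) 0 x| + |pd (fun y => u y 1) 1 x| := abs_add_le _ _
        _ ≤ Mh + Mh := add_le_add (hh x 0).1 (hh x 1).2
        _ ≤ Mω + 2 * Mh := by linarith
  rw [Fin.sum_univ_three]
  simp only [curl3, Matrix.cons_val_zero, Matrix.cons_val_one, Matrix.head_cons,
    Matrix.cons_val_two, Matrix.tail_cons]
  have hb0 := (hh x j).1
  have hb1 := (hh x j).2
  calc |(pd (fun y => u y 2) 1 x - pd (fun y => u y 1) 2 x) * pd (fun y => u y j) 0 x +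
        (pd (fun y => u y 0) 2 x - pd (fun y => u y 2) 0 x) * pd (fun y => u y j) 1 x +
        (pd (fun y => u y 1) 0 x - pd (fun y => u y 0) 1 x) * pd (fun y => u y j) 2 x|
      ≤ |(pd (fun y => u y 2) 1 x - pd (fun y => u y 1) 2 x) * pd (fun y => u y j) 0 x| +
        |(pd (fun y => u y 0) 2 x - pd (fun y => u y 2) 0 x) * pd (fun y => u y j) 1 x| +
        |(pd (fun y => u y 1) 0 x - pd (fun y => u y 0) 1 x) * pd (fun y => u y j) 2 x| :=
          abs_add_three _ _ _
    _ ≤ Mω * Mh + Mω * Mh + (2 * Mh) * (Mω + 2 * Mh) := by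
        rw [abs_mul, abs_mul, abs_mul]
        exact add_le_add (add_le_add (mul_le_mul hω0 hb0 (abs_nonneg _) hMω)
          (mul_le_mul hω1 hb1 (abs_nonneg _) hMω))
          (mul_le_mul hw2 hv (abs_nonneg _) (by linarith))
    _ ≤ 6 * (Mω * Mh + Mh ^ 2) := by nlinarith
end

section
/- Let χ : ℝ³₊ → ℝ be smooth with ∂₁χ = ∂₂χ = 0, and let u be C¹, divergence-free with u₃ = 0 on {z=0}, with vorticity ω = curl u. Then ‖(u·∇χ) ω‖_{L^∞} = ‖u₃ (∂_z χ) ω‖_{L^∞} ≤ C‖∂_z χ‖_{L^∞} ‖u‖²_{W^{1,∞}_co}, since each component of ω is a sum of ∂_z u_j terms and horizontal derivative terms and the product u₃∂_z u is controlled by the squared conormal W^{1,∞} norm. -/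
/-- The conormal weight `φ(z) = z/(1+z)` on the half-space. -/
noncomputable def phi (z : ℝ) : ℝ := z / (1 + z)

/-- for smooth `χ` with vanishing horizontal derivatives and a C¹
divergence-free `u` on `ℝ³₊` with `u₃ = 0` on `{z=0}` and vorticity `ω = curl u`,
one has `u·∇χ = u₃ ∂_z χ` and
`‖(u·∇χ) ω‖_{L^∞} ≤ C ‖∂_z χ‖_{L^∞} ‖u‖²_{W^{1,∞}_co}` (with `C = 16`). -/
theorem stmt12 (χ : (Fin 3 → ℝ) → ℝ) (hχ : ContDiff ℝ (⊤ : ℕ∞) χ)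
    (hχtan : ∀ x : Fin 3 → ℝ, pd χ 0 x = 0 ∧ pd χ 1 x = 0)
    (u : (Fin 3 → ℝ) → Fin 3 → ℝ) (hu : ContDiff ℝ 1 u)
    (hdiv : ∀ x : Fin 3 → ℝ, 0 ≤ x 2 → ∑ i, pd (fun y => u y i) i x = 0)
    (hb : ∀ x : Fin 3 → ℝ, x 2 = 0 → u x 2 = 0)
    (Kχ M : ℝ)
    (hKχ : ∀ x : Fin 3 → ℝ, 0 ≤ x 2 → |pd χ 2 x| ≤ Kχ)
    (hM : ∀ x : Fin 3 → ℝ, 0 ≤ x 2 → ∀ i : Fin 3,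
      |u x i| ≤ M ∧ |pd (fun y => u y i) 0 x| ≤ M ∧
        |pd (fun y => u y i) 1 x| ≤ M ∧ |phi (x 2) * pd (fun y => u y i) 2 x| ≤ M) :
    ∀ x : Fin 3 → ℝ, 0 < x 2 →
      (∑ i, u x i * pd χ i x) = u x 2 * pd χ 2 x ∧
      ∀ j : Fin 3, |(∑ i, u x i * pd χ i x) * curl3 u x j| ≤ 16 * Kχ * M ^ 2 := by
  have hdiff : ∀ i : Fin 3, Differentiable ℝ (fun y => u y i) := fun i =>
    (differentiable_pi.mp (hu.differentiable one_ne_zero)) i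
  intro x hx
  have hx0 : (0:ℝ) ≤ x 2 := le_of_lt hx
  have hM0 : (0:ℝ) ≤ M := le_trans (abs_nonneg _) (hM x hx0 0).1
  have hK0 : (0:ℝ) ≤ Kχ := le_trans (abs_nonneg _) (hKχ x hx0)
  have h1 : (∑ i, u x i * pd χ i x) = u x 2 * pd χ 2 x := by
    rw [Fin.sum_univ_three, (hχtan x).1, (hχtan x).2]; ring
  refine ⟨h1, ?_⟩
  -- Hardy-type bound: |u x 2| ≤ 2 M (x 2)
  set e : Fin 3 → ℝ := Pi.single 2 1 with he
  set c : Fin 3 → ℝ := x - (x 2) • e with hc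
  have hL2 : ∀ t : ℝ, (c + t • e) 2 = t := by
    intro t
    simp [hc, he, Pi.single_eq_same]
  have hLx : c + (x 2) • e = x := by
    simp [hc]
  have hg0 : u c 2 = 0 := by
    apply hb
    have := hL2 0
    simpa using this
  have hder : ∀ t : ℝ, HasDerivAt (fun s : ℝ => u (c + s • e) 2)
      (pd (fun y => u y 2) 2 (c + t • e)) t := by
    intro t
    have h1' : HasDerivAt (fun s : ℝ => c + s • e) e t := by
      simpa using ((hasDerivAt_id t).smul_const e).const_add c
    have h2 := ((hdiff 2) (c + t • e)).hasFDerivAt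
    have h3 := h2.comp_hasDerivAt t h1'
    exact h3
  have hbound : ∀ t ∈ Set.Icc (0:ℝ) (x 2),
      |pd (fun y => u y 2) 2 (c + t • e)| ≤ 2*M := by
    intro t ht
    have hz : (0:ℝ) ≤ (c + t • e) 2 := by rw [hL2]; exact ht.1
    have hd := hdiv (c + t • e) hz
    rw [Fin.sum_univ_three] at hd
    have h0 := (hM _ hz 0).2.1
    have h1' := (hM _ hz 1).2.2.1
    rw [abs_le] at h0 h1' ⊢
    constructor <;> linarith
  have hmvt := Convex.norm_image_sub_le_of_norm_hasDerivWithin_le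
      (f := fun s : ℝ => u (c + s • e) 2)
      (fun t _ => (hder t).hasDerivWithinAt)
      (fun t ht => by simpa [Real.norm_eq_abs] using hbound t ht)
      (convex_Icc 0 (x 2)) (Set.left_mem_Icc.2 hx0) (Set.right_mem_Icc.2 hx0)
  have hu3 : |u x 2| ≤ 2*M*(x 2) := by
    simp only [hLx] at hmvt
    simpa [Real.norm_eq_abs, hg0, abs_of_nonneg hx0] using hmvt
  have hu3M : |u x 2| ≤ M := (hM x hx0 2).1
  -- product bound via the weight
  have hφpos : 0 < phi (x 2) := div_pos hx (by linarith)
  have hprod : ∀ j : Fin 3, |u x 2 * pd (fun y => u y j) 2 x| ≤ 4*M^2 := by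
    intro j
    have hphi := (hM x hx0 j).2.2.2
    have key : |u x 2 / phi (x 2)| ≤ 4*M := by
      rw [abs_div, div_le_iff₀ (abs_pos.2 (ne_of_gt hφpos)), abs_of_pos hφpos]
      unfold phi
      have hz1 : (0:ℝ) < 1 + x 2 := by linarith
      have heq : 4*M*(x 2/(1+x 2)) = (4*M*x 2)/(1+x 2) := by ring
      rw [heq, le_div_iff₀ hz1]
      rcases le_total (x 2) 1 with h | h
      · nlinarith [hu3, abs_nonneg (u x 2)]
      · nlinarith [hu3M, abs_nonneg (u x 2)]
    calc |u x 2 * pd (fun y => u y j) 2 x|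
        = |u x 2 / phi (x 2)| * |phi (x 2) * pd (fun y => u y j) 2 x| := by
          rw [← abs_mul]; congr 1; field_simp
      _ ≤ (4*M)*M := mul_le_mul key hphi (abs_nonneg _) (by linarith)
      _ = 4*M^2 := by ring
  have habs : ∀ a b : ℝ, |u x 2 * (a - b)| ≤ |u x 2 * a| + |u x 2 * b| := by
    intro a b
    rw [mul_sub]
    exact abs_sub _ _
  have hhor : ∀ j : Fin 3, ∀ i : Fin 3, i = 0 ∨ i = 1 →
      |u x 2 * pd (fun y => u y j) i x| ≤ M*M := by
    intro j i hi
    rw [abs_mul]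
    rcases hi with rfl | rfl
    · exact mul_le_mul hu3M (hM x hx0 j).2.1 (abs_nonneg _) hM0
    · exact mul_le_mul hu3M (hM x hx0 j).2.2.1 (abs_nonneg _) hM0
  have hω : ∀ j : Fin 3, |u x 2 * curl3 u x j| ≤ 5*M^2 := by
    intro j
    fin_cases j
    · have := (habs (pd (fun y => u y 2) 1 x) (pd (fun y => u y 1) 2 x)).trans
        (add_le_add (hhor 2 1 (Or.inr rfl)) (hprod 1))
      simpa [curl3] using this.trans (by nlinarith [sq_nonneg M])
    · have := (habs (pd (fun y => u y 0) 2 x) (pd (fun y => u y 2) 0 x)).trans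
        (add_le_add (hprod 0) (hhor 2 0 (Or.inl rfl)))
      simpa [curl3] using this.trans (by nlinarith [sq_nonneg M])
    · have := (habs (pd (fun y => u y 1) 0 x) (pd (fun y => u y 0) 1 x)).trans
        (add_le_add (hhor 1 0 (Or.inl rfl)) (hhor 0 1 (Or.inr rfl)))
      simpa [curl3] using this.trans (by nlinarith [sq_nonneg M])
  intro j
  rw [h1]
  have hre : u x 2 * pd χ 2 x * curl3 u x j = pd χ 2 x * (u x 2 * curl3 u x j) := by ring
  rw [hre, abs_mul]
  calc |pd χ 2 x| * |u x 2 * curl3 u x j|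
      ≤ Kχ * (5*M^2) := mul_le_mul (hKχ x hx0) (hω j) (abs_nonneg _) hK0
    _ ≤ 16*Kχ*M^2 := by nlinarith [sq_nonneg M]
end

section
/- Let g : U → O(3) be a C¹ orthogonal frame field on an open set U ⊆ ℝ³, u a C¹ vector field, and ω = curl u. With frame derivatives ∂_l^ψ = Σ_j g_{jl}∂_j and frame components u_m^ψ = Σ_k g_{km}u_k, one has the pointwise decomposition ω = g_{·3} × g_{·1} ∂₃^ψ u₁^ψ + g_{·3} × g_{·2} ∂₃^ψ u₂^ψ + L, where each component of L is a finite sum of products of entries of g, their first derivatives, u, and tangential frame derivatives ∂₁^ψ u, ∂₂^ψ u; in particular ‖L‖_{L^∞(U)} ≤ C(g)·(‖u‖_{L^∞(U)} + ‖∂₁^ψ u‖_{L^∞(U)} + ‖∂₂^ψ u‖_{L^∞(U)}). -/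
/-- Frame derivative `∂_l^ψ = ∑_j g_{jl} ∂_j`. -/
noncomputable def framePd (g : (Fin 3 → ℝ) → Matrix (Fin 3) (Fin 3) ℝ)
    (l : Fin 3) (f : (Fin 3 → ℝ) → ℝ) (x : Fin 3 → ℝ) : ℝ :=
  ∑ j, g x j l * pd f j x

/-- Frame component `u_m^ψ = ∑_k g_{km} u_k`. -/
noncomputable def frameComp (g : (Fin 3 → ℝ) → Matrix (Fin 3) (Fin 3) ℝ)
    (u : (Fin 3 → ℝ) → Fin 3 → ℝ) (m : Fin 3) (x : Fin 3 → ℝ) : ℝ :=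
  ∑ k, g x k m * u x k

lemma pd_mul {f h : (Fin 3 → ℝ) → ℝ} {x : Fin 3 → ℝ} (hf : DifferentiableAt ℝ f x)
    (hh : DifferentiableAt ℝ h x) (j : Fin 3) :
    pd (fun y => f y * h y) j x = f x * pd h j x + h x * pd f j x := by
  simp [pd, fderiv_fun_mul hf hh]

lemma pd_sum {F : Fin 3 → (Fin 3 → ℝ) → ℝ} {x : Fin 3 → ℝ}
    (hF : ∀ k, DifferentiableAt ℝ (F k) x) (j : Fin 3) :
    pd (fun y => ∑ k, F k y) j x = ∑ k, pd (F k) j x := by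
  simp [pd, fderiv_fun_sum (fun k _ => hF k)]

lemma mul_abs_le {a b A B : ℝ} (h1 : |a| ≤ A) (h2 : |b| ≤ B) : |a * b| ≤ A * B := by
  rw [abs_mul]; exact mul_le_mul h1 h2 (abs_nonneg _) ((abs_nonneg a).trans h1)

set_option maxHeartbeats 1000000 in
/-- for a C¹ orthogonal frame field `g` on an open set `U` (bounded
in C¹ by `Kg`) and a C¹ field `u` with `ω = curl u`, one has the decomposition
`ω = (g_{·3} × g_{·1}) ∂₃^ψ u₁^ψ + (g_{·3} × g_{·2}) ∂₃^ψ u₂^ψ + L` on `U`, where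
the remainder `L` involves only `g`, its first derivatives, `u` and the
tangential frame derivatives of `u`, so that
`‖L‖_{L^∞(U)} ≤ C(g) (‖u‖_{L^∞(U)} + ‖∂₁^ψ u‖_{L^∞(U)} + ‖∂₂^ψ u‖_{L^∞(U)})`. -/
theorem stmt17 (U : Set (Fin 3 → ℝ)) (hU : IsOpen U)
    (u : (Fin 3 → ℝ) → Fin 3 → ℝ) (hu : ContDiff ℝ 1 u)
    (g : (Fin 3 → ℝ) → Matrix (Fin 3) (Fin 3) ℝ)
    (hg : ∀ i j : Fin 3, ContDiff ℝ 1 (fun x => g x i j))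
    (horth : ∀ x ∈ U, ∀ j k : Fin 3,
      ∑ i, g x i j * g x i k = if j = k then (1 : ℝ) else 0)
    (Kg : ℝ)
    (hKg : ∀ x ∈ U, ∀ i j k : Fin 3,
      |g x i j| ≤ Kg ∧ |pd (fun y => g y i j) k x| ≤ Kg)
    (Mu : ℝ)
    (hMu : ∀ x ∈ U, ∀ i : Fin 3,
      |u x i| ≤ Mu ∧ |framePd g 0 (fun y => u y i) x| ≤ Mu ∧
        |framePd g 1 (fun y => u y i) x| ≤ Mu) :
    ∃ C : ℝ, 0 < C ∧ ∃ L : (Fin 3 → ℝ) → Fin 3 → ℝ,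
      (∀ x ∈ U, curl3 u x =
        framePd g 2 (frameComp g u 0) x • crossProduct (fun j => g x j 2) (fun j => g x j 0)
        + framePd g 2 (frameComp g u 1) x • crossProduct (fun j => g x j 2) (fun j => g x j 1)
        + L x) ∧
      (∀ x ∈ U, ∀ j : Fin 3, |L x j| ≤ C * Mu) := by
  refine ⟨4 * |Kg| + 36 * Kg ^ 4 + 1, by positivity,
    fun x => curl3 u x
      - framePd g 2 (frameComp g u 0) x • crossProduct (fun j => g x j 2) (fun j => g x j 0)
      - framePd g 2 (frameComp g u 1) x • crossProduct (fun j => g x j 2) (fun j => g x j 1),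
    fun x hx => funext fun j => by
      simp only [Pi.add_apply, Pi.sub_apply, Pi.smul_apply, smul_eq_mul]
      ring, ?_⟩
  intro x hx i
  have hKx := hKg x hx
  have hMx := hMu x hx
  have hK0 : 0 ≤ Kg := (abs_nonneg _).trans (hKx 0 0 0).1
  have hMu0 : 0 ≤ Mu := (abs_nonneg _).trans (hMx 0).1
  have hud : ∀ k : Fin 3, DifferentiableAt ℝ (fun y => u y k) x :=
    fun k => (differentiable_pi.mp (hu.differentiable one_ne_zero) k) x
  have hgd : ∀ k m : Fin 3, DifferentiableAt ℝ (fun y => g y k m) x :=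
    fun k m => ((hg k m).differentiable one_ne_zero) x
  -- row orthonormality
  have h1 : (Matrix.transpose (g x)) * g x = 1 := by
    ext j k
    simp only [Matrix.mul_apply, Matrix.transpose_apply, Matrix.one_apply]
    exact horth x hx j k
  have hmat : g x * (Matrix.transpose (g x)) = 1 := mul_eq_one_comm.mp h1
  have hrow : ∀ j k : Fin 3, (∑ m, g x j m * g x k m) = if j = k then (1:ℝ) else 0 := by
    intro j k
    have h2 : (g x * (Matrix.transpose (g x))) j k = (1 : Matrix (Fin 3) (Fin 3) ℝ) j k := by rw [hmat]
    simpa [Matrix.mul_apply, Matrix.transpose_apply, Matrix.one_apply] using h2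
  have hr : ∀ j k : Fin 3,
      g x j 0 * g x k 0 + g x j 1 * g x k 1 + g x j 2 * g x k 2 = if j = k then (1:ℝ) else 0 := by
    intro j k; simpa [Fin.sum_univ_three] using hrow j k
  have hr00 := hr 0 0; rw [if_pos rfl] at hr00
  have hr01 := hr 0 1; rw [if_neg (by decide)] at hr01
  have hr02 := hr 0 2; rw [if_neg (by decide)] at hr02
  have hr10 := hr 1 0; rw [if_neg (by decide)] at hr10
  have hr11 := hr 1 1; rw [if_pos rfl] at hr11
  have hr12 := hr 1 2; rw [if_neg (by decide)] at hr12
  have hr20 := hr 2 0; rw [if_neg (by decide)] at hr20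
  have hr21 := hr 2 1; rw [if_neg (by decide)] at hr21
  have hr22 := hr 2 2; rw [if_pos rfl] at hr22
  -- ∂_j u_k in terms of frame derivatives
  have hD : ∀ j k : Fin 3, pd (fun y => u y k) j x =
      g x j 0 * framePd g 0 (fun y => u y k) x + g x j 1 * framePd g 1 (fun y => u y k) x
        + g x j 2 * framePd g 2 (fun y => u y k) x := by
    intro j k
    simp only [framePd, Fin.sum_univ_three]
    fin_cases j <;> simp only [Fin.zero_eta, Fin.mk_one, Fin.reduceFinMk]
    · linear_combination (-(pd (fun y => u y k) 0 x)) * hr00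
        - pd (fun y => u y k) 1 x * hr01 - pd (fun y => u y k) 2 x * hr02
    · linear_combination (-(pd (fun y => u y k) 0 x)) * hr10
        - pd (fun y => u y k) 1 x * hr11 - pd (fun y => u y k) 2 x * hr12
    · linear_combination (-(pd (fun y => u y k) 0 x)) * hr20
        - pd (fun y => u y k) 1 x * hr21 - pd (fun y => u y k) 2 x * hr22
  -- derivative of frame components
  have hFC : ∀ m j : Fin 3, pd (frameComp g u m) j x =
      ∑ k, (g x k m * pd (fun y => u y k) j x + u x k * pd (fun y => g y k m) j x) := by
    intro m j
    have h1 : pd (frameComp g u m) j x = pd (fun y => ∑ k, g y k m * u y k) j x := rfl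
    rw [h1, pd_sum (F := fun k y => g y k m * u y k) (fun k => ((hgd k m).mul (hud k) : DifferentiableAt ℝ (fun y => g y k m * u y k) x)) j]
    exact Finset.sum_congr rfl fun k _ => pd_mul (hgd k m) (hud k) j
  set R : Fin 3 → ℝ :=
    fun m => ∑ j, ∑ k, g x j 2 * (u x k * pd (fun y => g y k m) j x) with hR
  have hM : ∀ m : Fin 3, framePd g 2 (frameComp g u m) x =
      (∑ k, g x k m * framePd g 2 (fun y => u y k) x) + R m := by
    intro m
    simp only [hR, framePd, hFC, Fin.sum_univ_three]
    ring
  set T : Fin 3 → ℝ :=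
    ![ g x 1 0 * framePd g 0 (fun y => u y 2) x + g x 1 1 * framePd g 1 (fun y => u y 2) x
        - g x 2 0 * framePd g 0 (fun y => u y 1) x - g x 2 1 * framePd g 1 (fun y => u y 1) x,
       g x 2 0 * framePd g 0 (fun y => u y 0) x + g x 2 1 * framePd g 1 (fun y => u y 0) x
        - g x 0 0 * framePd g 0 (fun y => u y 2) x - g x 0 1 * framePd g 1 (fun y => u y 2) x,
       g x 0 0 * framePd g 0 (fun y => u y 1) x + g x 0 1 * framePd g 1 (fun y => u y 1) x
        - g x 1 0 * framePd g 0 (fun y => u y 0) x - g x 1 1 * framePd g 1 (fun y => u y 0) x ]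
    with hT
  have hL : ∀ i : Fin 3,
      curl3 u x i
        - framePd g 2 (frameComp g u 0) x * crossProduct (fun j => g x j 2) (fun j => g x j 0) i
        - framePd g 2 (frameComp g u 1) x * crossProduct (fun j => g x j 2) (fun j => g x j 1) i
      = T i - R 0 * crossProduct (fun j => g x j 2) (fun j => g x j 0) i
          - R 1 * crossProduct (fun j => g x j 2) (fun j => g x j 1) i := by
    intro i
    rw [hM 0, hM 1]
    fin_cases i
    · simp only [hT, curl3, crossProduct, Fin.sum_univ_three, Matrix.cons_val_zero,
        Matrix.cons_val_one, Matrix.head_cons, Matrix.cons_val_two, Matrix.tail_cons, LinearMap.mk₂_apply, Pi.sub_apply, Pi.smul_apply,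
        smul_eq_mul, Matrix.cons_val', Matrix.empty_val', Matrix.cons_val_fin_one,
        Fin.zero_eta, Fin.mk_one, Fin.reduceFinMk]
      rw [hD 1 2, hD 2 1]
      linear_combination
        framePd g 2 (fun y => u y 0) x * (g x 2 2 * hr10 - g x 1 2 * hr20)
        + framePd g 2 (fun y => u y 1) x * (g x 2 2 * hr11 - g x 1 2 * hr21)
        + framePd g 2 (fun y => u y 2) x * (g x 2 2 * hr12 - g x 1 2 * hr22)
    · simp only [hT, curl3, crossProduct, Fin.sum_univ_three, Matrix.cons_val_zero,
        Matrix.cons_val_one, Matrix.head_cons, Matrix.cons_val_two, Matrix.tail_cons, LinearMap.mk₂_apply, Pi.sub_apply, Pi.smul_apply,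
        smul_eq_mul, Matrix.cons_val', Matrix.empty_val', Matrix.cons_val_fin_one,
        Fin.zero_eta, Fin.mk_one, Fin.reduceFinMk]
      rw [hD 2 0, hD 0 2]
      linear_combination
        framePd g 2 (fun y => u y 0) x * (g x 0 2 * hr20 - g x 2 2 * hr00)
        + framePd g 2 (fun y => u y 1) x * (g x 0 2 * hr21 - g x 2 2 * hr01)
        + framePd g 2 (fun y => u y 2) x * (g x 0 2 * hr22 - g x 2 2 * hr02)
    · simp only [hT, curl3, crossProduct, Fin.sum_univ_three, Matrix.cons_val_zero,
        Matrix.cons_val_one, Matrix.head_cons, Matrix.cons_val_two, Matrix.tail_cons, LinearMap.mk₂_apply, Pi.sub_apply, Pi.smul_apply,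
        smul_eq_mul, Matrix.cons_val', Matrix.empty_val', Matrix.cons_val_fin_one,
        Fin.zero_eta, Fin.mk_one, Fin.reduceFinMk]
      rw [hD 0 1, hD 1 0]
      linear_combination
        framePd g 2 (fun y => u y 0) x * (g x 1 2 * hr00 - g x 0 2 * hr10)
        + framePd g 2 (fun y => u y 1) x * (g x 1 2 * hr01 - g x 0 2 * hr11)
        + framePd g 2 (fun y => u y 2) x * (g x 1 2 * hr02 - g x 0 2 * hr12)
  -- bounds
  have hRb : ∀ m : Fin 3, |R m| ≤ 9 * (Kg * (Mu * Kg)) := by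
    intro m
    have t : ∀ j k : Fin 3,
        |g x j 2 * (u x k * pd (fun y => g y k m) j x)| ≤ Kg * (Mu * Kg) :=
      fun j k => mul_abs_le (hKx j 2 0).1 (mul_abs_le (hMx k).1 (hKx k m j).2)
    rw [hR]
    calc |∑ j, ∑ k, g x j 2 * (u x k * pd (fun y => g y k m) j x)|
        ≤ ∑ j, |∑ k, g x j 2 * (u x k * pd (fun y => g y k m) j x)| :=
          Finset.abs_sum_le_sum_abs _ _
      _ ≤ ∑ j : Fin 3, ∑ k : Fin 3, |g x j 2 * (u x k * pd (fun y => g y k m) j x)| :=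
          Finset.sum_le_sum (fun j _ => Finset.abs_sum_le_sum_abs _ _)
      _ ≤ ∑ _j : Fin 3, ∑ _k : Fin 3, (Kg * (Mu * Kg)) :=
          Finset.sum_le_sum (fun j _ => Finset.sum_le_sum (fun k _ => t j k))
      _ = 9 * (Kg * (Mu * Kg)) := by simp [Fin.sum_univ_three]; ring
  have hTb : ∀ i : Fin 3, |T i| ≤ 4 * (Kg * Mu) := by
    intro i
    fin_cases i <;>
      simp only [hT, Matrix.cons_val_zero, Matrix.cons_val_one, Matrix.head_cons, Matrix.cons_val_two, Matrix.tail_cons,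
        Matrix.cons_val', Matrix.empty_val', Matrix.cons_val_fin_one,
        Fin.zero_eta, Fin.mk_one, Fin.reduceFinMk]
    · have b1 := abs_le.mp (mul_abs_le (hKx 1 0 0).1 (hMx 2).2.1)
      have b2 := abs_le.mp (mul_abs_le (hKx 1 1 0).1 (hMx 2).2.2)
      have b3 := abs_le.mp (mul_abs_le (hKx 2 0 0).1 (hMx 1).2.1)
      have b4 := abs_le.mp (mul_abs_le (hKx 2 1 0).1 (hMx 1).2.2)
      rw [abs_le]; constructor <;> linarith [b1.1, b1.2, b2.1, b2.2, b3.1, b3.2, b4.1, b4.2]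
    · have b1 := abs_le.mp (mul_abs_le (hKx 2 0 0).1 (hMx 0).2.1)
      have b2 := abs_le.mp (mul_abs_le (hKx 2 1 0).1 (hMx 0).2.2)
      have b3 := abs_le.mp (mul_abs_le (hKx 0 0 0).1 (hMx 2).2.1)
      have b4 := abs_le.mp (mul_abs_le (hKx 0 1 0).1 (hMx 2).2.2)
      rw [abs_le]; constructor <;> linarith [b1.1, b1.2, b2.1, b2.2, b3.1, b3.2, b4.1, b4.2]
    · have b1 := abs_le.mp (mul_abs_le (hKx 0 0 0).1 (hMx 1).2.1)
      have b2 := abs_le.mp (mul_abs_le (hKx 0 1 0).1 (hMx 1).2.2)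
      have b3 := abs_le.mp (mul_abs_le (hKx 1 0 0).1 (hMx 0).2.1)
      have b4 := abs_le.mp (mul_abs_le (hKx 1 1 0).1 (hMx 0).2.2)
      rw [abs_le]; constructor <;> linarith [b1.1, b1.2, b2.1, b2.2, b3.1, b3.2, b4.1, b4.2]
  have hcp : ∀ m i : Fin 3,
      |crossProduct (fun j => g x j 2) (fun j => g x j m) i| ≤ 2 * (Kg * Kg) := by
    intro m i
    have t : ∀ a b c d : Fin 3, |g x a b * g x c d| ≤ Kg * Kg :=
      fun a b c d => mul_abs_le (hKx a b 0).1 (hKx c d 0).1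
    fin_cases i <;>
      simp only [crossProduct, LinearMap.mk₂_apply, Matrix.cons_val_zero, Matrix.cons_val_one,
        Matrix.head_cons, Matrix.cons_val_two, Matrix.tail_cons, Matrix.cons_val',
        Matrix.empty_val', Matrix.cons_val_fin_one, Fin.zero_eta, Fin.mk_one, Fin.reduceFinMk] <;>
    · rw [abs_le]
      constructor <;>
        linarith [(abs_le.mp (t 1 2 2 m)).1, (abs_le.mp (t 1 2 2 m)).2,
          (abs_le.mp (t 2 2 1 m)).1, (abs_le.mp (t 2 2 1 m)).2,
          (abs_le.mp (t 2 2 0 m)).1, (abs_le.mp (t 2 2 0 m)).2,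
          (abs_le.mp (t 0 2 2 m)).1, (abs_le.mp (t 0 2 2 m)).2,
          (abs_le.mp (t 0 2 1 m)).1, (abs_le.mp (t 0 2 1 m)).2,
          (abs_le.mp (t 1 2 0 m)).1, (abs_le.mp (t 1 2 0 m)).2]
  simp only [Pi.sub_apply, Pi.smul_apply, smul_eq_mul]
  rw [hL i]
  have h0 := hTb i
  have h1 := mul_abs_le (hRb 0) (hcp 0 i)
  have h2 := mul_abs_le (hRb 1) (hcp 1 i)
  rw [abs_of_nonneg hK0, abs_le]
  constructor <;>
    nlinarith [(abs_le.mp h0).1, (abs_le.mp h0).2, (abs_le.mp h1).1, (abs_le.mp h1).2,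
      (abs_le.mp h2).1, (abs_le.mp h2).2, hMu0, hK0]
end
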